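/- arXiv:0810.1509 — 3 statements merged into one kernel-verified Lean document; each statement's English description precedes it below -/
import Mathlib

section
/- In a fully residually free group G, any two elements g and h either commute or generate a free subgroup of rank 2, i.e. the subgroup ⟨g,h⟩ of G is free of rank 2. -/
/-!
If `g` and `h` do not commute, a homomorphism `φ : G → F` to a free group that is injective on
`{gh, hg}` sends them to non-commuting `a, b ∈ F`. By Nielsen–Schreier `⟨a, b⟩` is free; it is a
quotient of `F₂` (so its rank is at most 2, counting maps to `ZMod 2`) and it is not abelian (so its
rank is at least 2). Hence `F₂ → ⟨a, b⟩` is a surjection `F₂ → F₂`, which is injective because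
finitely generated residually finite groups are Hopfian; residual finiteness of free groups comes
from letting a reduced word act by permutations on its own positions. So `F₂ → ⟨g, h⟩ → ⟨a, b⟩`
is injective, and `⟨g, h⟩ ≅ F₂`.
-/

/-- A group `G` is *fully residually free* if for every finite subset `P` of `G` there is a
homomorphism from `G` to a free group whose restriction to `P` is injective. -/
def FullyResiduallyFree (G : Type) [Group G] : Prop :=
  ∀ P : Finset G, ∃ (α : Type) (φ : G →* FreeGroup α), Set.InjOn φ P

open Function

theorem List.prod_smul_of_chain {M β : Type*} [Monoid M] [MulAction M β] :
    ∀ (l : List M) (p : ℕ → β), (∀ i (hi : i < l.length), l[i] • p (i + 1) = p i) →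
      l.prod • p l.length = p 0
  | [], _, _ => one_smul _ _
  | a :: l, p, h => by
    rw [List.prod_cons, mul_smul, List.length_cons,
      List.prod_smul_of_chain l (fun i => p (i + 1)) fun i hi => h (i + 1) (by simpa using hi)]
    exact h 0 (by simp)

theorem Equiv.Perm.exists_apply_eq_of_rel {β : Type*} [Finite β] (R : β → β → Prop)
    (hfun : ∀ {j k k'}, R j k → R j k' → k = k') (hinj : ∀ {j j' k}, R j k → R j' k → j = j') :
    ∃ σ : Perm β, ∀ j k, R j k → σ j = k := by
  classical
  let f : {j // ∃ k, R j k} → β := fun j => j.2.choose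
  have hf : Injective f := fun j j' hjj' =>
    Subtype.ext (hinj j.2.choose_spec (show R j' (f j) from hjj' ▸ j'.2.choose_spec))
  refine ⟨(Equiv.ofInjective f hf).extendSubtype, fun j k hjk => ?_⟩
  rw [extendSubtype_apply_of_mem _ _ ⟨k, hjk⟩]
  exact hfun (Exists.choose_spec ⟨k, hjk⟩) hjk

namespace Group

theorem finite_monoidHom_of_fg (G Q : Type*) [Group G] [FG G] [Monoid Q] [Finite Q] :
    Finite (G →* Q) := by
  obtain ⟨S, hS, hSfin⟩ := fg_iff.mp ‹FG G›
  have : Finite S := hSfin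
  exact Finite.of_injective (fun (f : G →* Q) (s : S) => f s) fun f f' hff' =>
    MonoidHom.eq_of_eqOn_dense hS fun s hs => congrFun hff' ⟨s, hs⟩

/-- Mal'cev: precomposition with `θ` is injective, hence bijective, on the finite set of maps to a
finite quotient, so every such map factors through `θ` and kills `ker θ`. -/
theorem injective_of_surjective_of_residuallyFinite {G : Type*} [Group G] [FG G]
    [ResiduallyFinite G] {θ : G →* G} (hθ : Surjective θ) : Injective θ := by
  refine (injective_iff_map_eq_one θ).mpr fun w hw => by_contra fun hne => ?_
  obtain ⟨N, hwN⟩ := exists_finiteIndexNormalSubgroup_notMem w hne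
  have : Finite (G →* G ⧸ N.toSubgroup) := finite_monoidHom_of_fg _ _
  obtain ⟨σ, hσ⟩ := Finite.injective_iff_surjective.mp
    (fun _ _ h => (MonoidHom.cancel_right hθ).mp h :
      Injective fun σ : G →* G ⧸ N.toSubgroup => σ.comp θ)
    (QuotientGroup.mk' N.toSubgroup)
  have hw' : QuotientGroup.mk' N.toSubgroup w = 1 := by
    rw [← hσ, MonoidHom.comp_apply, hw, map_one]
  exact hwN (FiniteIndexNormalSubgroup.mem_toSubgroup_iff.mp ((QuotientGroup.eq_one_iff w).mp hw'))

end Group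

namespace FreeGroup

variable {α : Type*}

/-- The letter at position `i` of `L` is an edge between the points `i` and `i + 1`, to be
traversed from `i + 1` to `i` by the permutation of its generator when the letter is positive
and from `i` to `i + 1` when it is negative; `WordEdge L x j k` says that the permutation of `x`
must send `j` to `k`. -/
def WordEdge (L : List (α × Bool)) (x : α) (j k : ℕ) : Prop :=
  (k + 1 = j ∧ L[k]? = some (x, true)) ∨ (j + 1 = k ∧ L[j]? = some (x, false))

theorem IsReduced.eq_of_getElem?_succ {L : List (α × Bool)} (hL : IsReduced L) {i : ℕ} {x : α}
    {b b' : Bool} (h : L[i]? = some (x, b)) (h' : L[i + 1]? = some (x, b')) : b = b' := by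
  obtain ⟨_, hLi⟩ := List.getElem?_eq_some_iff.mp h
  obtain ⟨hi', hLi'⟩ := List.getElem?_eq_some_iff.mp h'
  have := List.IsChain.getElem hL i hi'
  rw [hLi, hLi'] at this
  exact this rfl

theorem IsReduced.wordEdge_right_unique {L : List (α × Bool)} (hL : IsReduced L) {x : α}
    {j k k' : ℕ} (h : WordEdge L x j k) (h' : WordEdge L x j k') : k = k' := by
  rcases h with ⟨hj, hk⟩ | ⟨hk, hj⟩ <;> rcases h' with ⟨hj', hk'⟩ | ⟨hk', hj'⟩
  · omega
  · subst hj; cases hL.eq_of_getElem?_succ hk hj'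
  · subst hj'; cases hL.eq_of_getElem?_succ hk' hj
  · omega

theorem IsReduced.wordEdge_left_unique {L : List (α × Bool)} (hL : IsReduced L) {x : α}
    {j j' k : ℕ} (h : WordEdge L x j k) (h' : WordEdge L x j' k) : j = j' := by
  rcases h with ⟨hj, hk⟩ | ⟨hk, hj⟩ <;> rcases h' with ⟨hj', hk'⟩ | ⟨hk', hj'⟩
  · omega
  · subst hk'; cases hL.eq_of_getElem?_succ hj' hk
  · subst hk; cases hL.eq_of_getElem?_succ hj hk'
  · omega

theorem lift_mk_apply_last [DecidableEq α] {L : List (α × Bool)}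
    {σ : α → Equiv.Perm (Fin (L.length + 1))}
    (hσ : ∀ x (j k : Fin (L.length + 1)), WordEdge L x j k → σ x j = k) :
    lift σ (mk L) (Fin.last L.length) = 0 := by
  let p : ℕ → Fin (L.length + 1) := fun i => ⟨min i L.length, by omega⟩
  have hp : ∀ i ≤ L.length, (p i : ℕ) = i := fun i hi => min_eq_left hi
  have hchain := List.prod_smul_of_chain (L.map fun x => cond x.2 (σ x.1) (σ x.1)⁻¹) p
    fun i hi => by
      rw [List.length_map] at hi
      rw [List.getElem_map, Equiv.Perm.smul_def]
      rcases hxb : L[i] with ⟨x, _ | _⟩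
      · rw [cond_false, Equiv.Perm.inv_eq_iff_eq]
        refine (hσ x _ _ (Or.inr ?_)).symm
        rw [hp i hi.le, hp (i + 1) hi, List.getElem?_eq_getElem hi, hxb]
        exact ⟨rfl, rfl⟩
      · refine hσ x _ _ (Or.inl ?_)
        rw [hp i hi.le, hp (i + 1) hi, List.getElem?_eq_getElem hi, hxb]
        exact ⟨rfl, rfl⟩
  have hlast : p L.length = Fin.last L.length := Fin.ext (hp _ le_rfl)
  have hzero : p 0 = 0 := Fin.ext (hp 0 L.length.zero_le)
  rw [List.length_map, hlast, hzero] at hchain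
  rw [lift_mk]
  exact hchain

instance residuallyFinite : Group.ResiduallyFinite (FreeGroup α) := by
  classical
  refine Group.residuallyFinite_of_forall_exists_finite_monoidHom fun w hw => ?_
  set L := w.toWord
  have hσ : ∀ x, ∃ σ : Equiv.Perm (Fin (L.length + 1)),
      ∀ j k : Fin (L.length + 1), WordEdge L x j k → σ j = k :=
    fun x => Equiv.Perm.exists_apply_eq_of_rel _
      (fun h h' => Fin.ext (isReduced_toWord.wordEdge_right_unique h h'))
      (fun h h' => Fin.ext (isReduced_toWord.wordEdge_left_unique h h'))
  choose σ hσ using hσ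
  refine ⟨_, _, inferInstance, lift σ, fun h1 => ?_⟩
  have := lift_mk_apply_last hσ
  rw [mk_toWord, h1, Equiv.Perm.one_apply] at this
  exact hw (toWord_eq_nil_iff.mp (List.length_eq_zero_iff.mp (Fin.last_eq_zero_iff.mp this)))

theorem injective_lift_comp_of_surjective {X Y M : Type*} [Group M]
    {θ : FreeGroup Y →* FreeGroup X} (hθ : Surjective θ) :
    Injective fun u : X → M => fun y => lift u (θ (of y)) := fun _ _ huv =>
  lift.injective <| (MonoidHom.cancel_right hθ).mp <| ext_hom _ _ fun y => congrFun huv y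

theorem finite_of_surjective {X Y : Type*} [Finite Y] {θ : FreeGroup Y →* FreeGroup X}
    (hθ : Surjective θ) : Finite X := by
  classical
  have : Finite (X → Multiplicative (ZMod 2)) :=
    Finite.of_injective _ (injective_lift_comp_of_surjective hθ)
  exact Finite.of_injective (fun x => Pi.mulSingle x (Multiplicative.ofAdd (1 : ZMod 2)))
    fun x y hxy => by simpa [Pi.mulSingle_apply] using congrFun hxy x

theorem card_le_card_of_surjective {X Y : Type*} [Finite Y] {θ : FreeGroup Y →* FreeGroup X}
    (hθ : Surjective θ) : Nat.card X ≤ Nat.card Y := by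
  have := finite_of_surjective hθ
  have hcard := Nat.card_le_card_of_injective _
    (injective_lift_comp_of_surjective (M := Multiplicative (ZMod 2)) hθ)
  rw [Nat.card_fun, Nat.card_fun, Nat.card_eq_fintype_card, Fintype.card_multiplicative,
    ZMod.card] at hcard
  exact (Nat.pow_le_pow_iff_right one_lt_two).mp hcard

instance {X : Type*} [Subsingleton X] : IsMulCommutative (FreeGroup X) := by
  cases isEmpty_or_nonempty X
  · infer_instance
  · have := uniqueOfSubsingleton (Classical.arbitrary X)
    infer_instance

theorem injective_lift_of_not_commute {a b : FreeGroup α} (hab : ¬Commute a b) :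
    Injective (lift ![a, b]) := by
  set ψ := lift ![a, b]
  let e := IsFreeGroup.toFreeGroup ψ.range
  let θ := e.toMonoidHom.comp ψ.rangeRestrict
  have hθ : Surjective θ := e.surjective.comp ψ.rangeRestrict_surjective
  have := finite_of_surjective hθ
  have hX : Nat.card (IsFreeGroup.Generators ψ.range) = 2 := by
    refine (card_le_card_of_surjective hθ).trans_eq (Nat.card_fin 2) |>.antisymm ?_
    by_contra! hlt
    have := Finite.card_le_one_iff_subsingleton.mp (Nat.le_of_lt_succ hlt)
    have hcomm : Commute (θ (of 0)) (θ (of 1)) := mul_comm' _ _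
    exact hab (by simpa [θ, ψ] using (hcomm.map e.symm.toMonoidHom).map ψ.range.subtype)
  let eX := freeGroupCongr ((Finite.equivFin _).trans (finCongr hX))
  have hθ₂ : Injective (eX.toMonoidHom.comp θ) :=
    Group.injective_of_surjective_of_residuallyFinite (eX.surjective.comp hθ)
  have hρ : Injective ψ.rangeRestrict := fun u v huv => hθ₂ (by simp [θ, huv])
  exact fun u v h => hρ (Subtype.ext h)

end FreeGroup

theorem Subgroup.nonempty_closure_pair_mulEquiv_freeGroup {G : Type*} [Group G] {g h : G}
    (hinj : Injective (FreeGroup.lift ![g, h])) :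
    Nonempty (Subgroup.closure {g, h} ≃* FreeGroup (Fin 2)) := by
  have hrange : (FreeGroup.lift ![g, h]).range = Subgroup.closure {g, h} := by
    rw [FreeGroup.range_lift_eq_closure, Matrix.range_cons_cons_empty]
  exact ⟨(MulEquiv.subgroupCongr hrange.symm).trans (MonoidHom.ofInjective hinj).symm⟩

/-- In a fully residually free group, two elements either commute or generate a free
subgroup of rank 2. -/
theorem commute_or_free_of_fullyResiduallyFree (G : Type) [Group G]
    (hG : FullyResiduallyFree G) (g h : G) :
    g * h = h * g ∨ Nonempty (↥(Subgroup.closure {g, h}) ≃* FreeGroup (Fin 2)) := by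
  classical
  refine or_iff_not_imp_left.mpr fun hgh => Subgroup.nonempty_closure_pair_mulEquiv_freeGroup ?_
  obtain ⟨α, φ, hφ⟩ := hG {g * h, h * g}
  have hφgh : ¬Commute (φ g) (φ h) := fun hc =>
    hgh (hφ (by simp) (by simp) (by rw [map_mul, map_mul, hc.eq]))
  have hcomp : φ.comp (FreeGroup.lift ![g, h]) = FreeGroup.lift ![φ g, φ h] :=
    FreeGroup.ext_hom _ _ fun i => by fin_cases i <;> simp
  have hinj := FreeGroup.injective_lift_of_not_commute hφgh
  rw [← hcomp, MonoidHom.coe_comp] at hinj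
  exact hinj.of_comp
end

section
/- Every fully residually free group G is CSA: every maximal abelian subgroup A of G is malnormal, i.e. for every g ∈ G with g ∉ A one has gAg⁻¹ ∩ A = {1}. -/
/-!
By Nielsen–Schreier the centralizer of a nontrivial element `u` of a free group is a free group
with `u` in its centre, hence cyclic. In a torsion-free group with cyclic centralizers,
commutation is transitive on nontrivial elements, and if `u` commutes with `g u g⁻¹` then
conjugation by `g` sends a generator `c` of the centralizer of `u` to `c` or `c⁻¹`; in the second
case `g²` is a power of `c` inverted by `g`, so `g² = 1` and `g = 1`.
Both conclusions are equations implied by one inequation `u ≠ 1`, so they pass to a fully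
residually free group through a homomorphism to a free group that separates the few elements
involved. There the centralizer of a nontrivial `a ∈ A` is abelian and contains `A`, hence
equals `A`, and it contains every `g` with `g a g⁻¹ ∈ A`.
-/

open Subgroup

namespace IsFreeGroup

variable {G : Type*} [Group G] [IsFreeGroup G]

instance : IsMulTorsionFree G :=
  (toFreeGroup G).injective.isMulTorsionFree (toFreeGroup G).toMonoidHom

theorem of_ne_one (a : Generators G) : of a ≠ 1 := fun h => by
  simpa using congrArg (lift fun _ => Multiplicative.ofAdd (1 : ℤ)) h

theorem not_commute_of_ne {a b : Generators G} (h : a ≠ b) : ¬Commute (of a) (of b) := by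
  classical
  intro hab
  have := congrArg
    (lift fun x => if x = a then Equiv.swap (0 : Fin 3) 1 else Equiv.swap 1 2) hab.eq
  simp only [map_mul, lift_of, if_neg h.symm] at this
  revert this
  decide

theorem isCyclic_of_subsingleton_generators [Subsingleton (Generators G)] : IsCyclic G := by
  refine (toFreeGroup G).isCyclic.mpr ?_
  cases isEmpty_or_nonempty (Generators G)
  · infer_instance
  · have := uniqueOfSubsingleton (Classical.arbitrary (Generators G))
    infer_instance

instance [IsMulCommutative G] : IsCyclic G :=
  have : Subsingleton (Generators G) :=
    ⟨fun _ _ => by_contra fun h => not_commute_of_ne h (IsMulCommutative.is_comm.comm _ _)⟩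
  isCyclic_of_subsingleton_generators

theorem exists_zpow_eq_zpow_of_commute {x w : G} (h : Commute x w) (hw : w ≠ 1) :
    ∃ r s : ℤ, s ≠ 0 ∧ x ^ s = w ^ r := by
  have : IsMulCommutative (closure {x, w}) := isMulCommutative_closure <| by
    simp only [Set.mem_insert_iff, Set.mem_singleton_iff]
    rintro _ (rfl | rfl) _ (rfl | rfl) <;> first | rfl | exact h.eq | exact h.eq.symm
  obtain ⟨e, he⟩ := (closure {x, w}).isCyclic_iff_exists_zpowers_eq_top.mp inferInstance
  obtain ⟨r, rfl⟩ := mem_zpowers_iff.mp (he ▸ subset_closure (by simp) : x ∈ zpowers e)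
  obtain ⟨s, rfl⟩ := mem_zpowers_iff.mp (he ▸ subset_closure (by simp) : w ∈ zpowers e)
  refine ⟨r, s, fun hs => hw (by rw [hs, zpow_zero]), ?_⟩
  rw [← zpow_mul, ← zpow_mul, mul_comm]

/-- For `b ≠ b'`, the character `χ` counting occurrences of `b'` kills `z`, since a nonzero power
of `z` is a power of `of b`; then `z ^ s = (of b') ^ r` with `s ≠ 0` forces `r = 0`, so `z = 1`. -/
theorem subsingleton_generators_of_mem_center {z : G} (hz : z ∈ center G) (hz1 : z ≠ 1) :
    Subsingleton (Generators G) := by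
  classical
  refine ⟨fun b b' => by_contra fun hbb' => hz1 ?_⟩
  let χ : G →* Multiplicative ℤ := lift (Pi.mulSingle b' (Multiplicative.ofAdd 1))
  have hχz : χ z = 1 := by
    obtain ⟨r, s, hs, hzb⟩ :=
      exists_zpow_eq_zpow_of_commute (mem_center_iff.mp hz (of b)).symm (of_ne_one b)
    have := congrArg χ hzb
    simp only [map_zpow, χ, lift_of, Pi.mulSingle_eq_of_ne hbb', one_zpow] at this
    exact (IsMulTorsionFree.zpow_eq_one_iff_left hs).mp this
  obtain ⟨r, s, hs, hzb'⟩ :=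
    exists_zpow_eq_zpow_of_commute (mem_center_iff.mp hz (of b')).symm (of_ne_one b')
  have hr : r = 0 := by
    simpa [hχz, χ, ← ofAdd_zsmul] using (congrArg χ hzb').symm
  rw [hr, zpow_zero] at hzb'
  exact (IsMulTorsionFree.zpow_eq_one_iff_left hs).mp hzb'

theorem isCyclic_centralizer {u : G} (hu : u ≠ 1) : IsCyclic (centralizer {u}) :=
  have : Subsingleton (Generators (centralizer {u})) :=
    subsingleton_generators_of_mem_center (z := ⟨u, mem_centralizer_singleton_iff.mpr rfl⟩)
      (mem_center_iff.mpr fun g => Subtype.ext (mem_centralizer_singleton_iff.mp g.2))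
      (by simpa [Subtype.ext_iff] using hu)
  isCyclic_of_subsingleton_generators

end IsFreeGroup

section CyclicCentralizers

variable {G : Type*} [Group G]

theorem commute_of_commute_of_isCyclic_centralizer
    (hcyc : ∀ u : G, u ≠ 1 → IsCyclic (centralizer {u})) {u x y : G} (hu : u ≠ 1)
    (hx : Commute x u) (hy : Commute y u) : Commute x y := by
  have := hcyc u hu
  exact congrArg Subtype.val <| IsMulCommutative.is_comm.comm
    (⟨x, mem_centralizer_singleton_iff.mpr hx.eq⟩ : centralizer {u})
    ⟨y, mem_centralizer_singleton_iff.mpr hy.eq⟩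

theorem commute_of_commute_conj_of_isCyclic_centralizer [IsMulTorsionFree G]
    (hcyc : ∀ u : G, u ≠ 1 → IsCyclic (centralizer {u})) {u g : G} (hu : u ≠ 1)
    (h : Commute u (g * u * g⁻¹)) : Commute g u := by
  obtain ⟨c, hc⟩ := (centralizer {u}).isCyclic_iff_exists_zpowers_eq_top.mp (hcyc u hu)
  have hpow : ∀ x, Commute x u → ∃ k : ℤ, c ^ k = x := fun x hx =>
    mem_zpowers_iff.mp (hc ▸ mem_centralizer_singleton_iff.mpr hx.eq)
  obtain ⟨m, rfl⟩ := hpow u (Commute.refl u)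
  have hc1 : c ≠ 1 := by rintro rfl; exact hu (one_zpow m)
  have hinj : Function.Injective (c ^ · : ℤ → G) :=
    injective_zpow_iff_not_isOfFinOrder.mpr (not_isOfFinOrder_of_isMulTorsionFree hc1)
  -- `h c h⁻¹` and `c ^ m` both commute with the nontrivial element `h c ^ m h⁻¹`
  have hconj : ∀ h : G, Commute (c ^ m) (h * c ^ m * h⁻¹) → ∃ s : ℤ, c ^ s = h * c * h⁻¹ := by
    intro h hh
    refine hpow _ (commute_of_commute_of_isCyclic_centralizer hcyc ?_ ?_ hh)
    · simpa using hu
    · simp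
  obtain ⟨s, hs⟩ := hconj g h
  obtain ⟨t, ht⟩ := hconj g⁻¹ <| by
    simpa [mul_assoc] using (h.map (MulAut.conj g⁻¹).toMonoidHom).symm
  have hts : t * s = 1 := hinj <| calc
    c ^ (t * s) = (g⁻¹ * c * g⁻¹⁻¹) ^ s := by rw [zpow_mul, ht]
    _ = g⁻¹ * (g * c * g⁻¹) * g⁻¹⁻¹ := by rw [conj_zpow, hs]
    _ = c ^ (1 : ℤ) := by group
  rcases Int.eq_one_or_neg_one_of_mul_eq_one' hts with ⟨-, rfl⟩ | ⟨-, rfl⟩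
  · have hgc : Commute g c := by
      rw [zpow_one] at hs
      exact (eq_mul_inv_iff_mul_eq.mp hs).symm
    exact hgc.zpow_right m
  · have hconj_pow : ∀ k : ℤ, g * c ^ k * g⁻¹ = c ^ (-k) := fun k => by
      rw [← conj_zpow, ← hs, ← zpow_mul, neg_one_mul]
    have hg2 : Commute (g ^ 2) (c ^ m) := calc
      g ^ 2 * c ^ m = g * (g * c ^ m * g⁻¹) * g⁻¹ * g ^ 2 := by simp [sq, mul_assoc]
      _ = c ^ m * g ^ 2 := by rw [hconj_pow, hconj_pow, neg_neg]
    obtain ⟨j, hj⟩ := hpow (g ^ 2) hg2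
    have hj0 : j = 0 := by
      have : c ^ (-j) = c ^ j := by rw [← hconj_pow, hj]; group
      have := hinj this
      omega
    have hg : g = 1 := (pow_eq_one_iff_left two_ne_zero).mp (by rw [← hj, hj0, zpow_zero])
    rw [hg]
    exact Commute.one_left _

end CyclicCentralizers

namespace FullyResiduallyFree

variable {G : Type} [Group G]

theorem exists_hom_map_ne_one_and_eq_of_map_eq (hG : FullyResiduallyFree G) {a : G} (ha : a ≠ 1)
    (p q : G) : ∃ (α : Type) (φ : G →* FreeGroup α), φ a ≠ 1 ∧ (φ p = φ q → p = q) := by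
  classical
  obtain ⟨α, φ, hφ⟩ := hG {1, a, p, q}
  exact ⟨α, φ, fun h => ha (hφ (by simp) (by simp) (by rw [h, map_one])),
    hφ (by simp) (by simp)⟩

theorem commute_of_commute (hG : FullyResiduallyFree G) {u x y : G} (hu : u ≠ 1)
    (hx : Commute x u) (hy : Commute y u) : Commute x y := by
  obtain ⟨α, φ, hφu, hφ⟩ := hG.exists_hom_map_ne_one_and_eq_of_map_eq hu (x * y) (y * x)
  refine hφ ?_
  rw [map_mul, map_mul]
  exact (commute_of_commute_of_isCyclic_centralizer (fun _ => IsFreeGroup.isCyclic_centralizer)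
    hφu (hx.map φ) (hy.map φ)).eq

theorem commute_of_commute_conj (hG : FullyResiduallyFree G) {u g : G} (hu : u ≠ 1)
    (h : Commute u (g * u * g⁻¹)) : Commute g u := by
  obtain ⟨α, φ, hφu, hφ⟩ := hG.exists_hom_map_ne_one_and_eq_of_map_eq hu (g * u) (u * g)
  refine hφ ?_
  rw [map_mul, map_mul]
  exact (commute_of_commute_conj_of_isCyclic_centralizer
    (fun _ => IsFreeGroup.isCyclic_centralizer) hφu (by simpa using h.map φ)).eq

end FullyResiduallyFree

/-- Every fully residually free group is CSA: every maximal abelian subgroup `A` is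
malnormal, i.e. for every `g ∉ A` the intersection `gAg⁻¹ ∩ A` is trivial. -/
theorem fullyResiduallyFree_CSA (G : Type) [Group G] (hG : FullyResiduallyFree G)
    (A : Subgroup G)
    (habelian : ∀ x ∈ A, ∀ y ∈ A, x * y = y * x)
    (hmax : ∀ B : Subgroup G, (∀ x ∈ B, ∀ y ∈ B, x * y = y * x) → A ≤ B → B = A) :
    ∀ g : G, g ∉ A → ∀ a ∈ A, g * a * g⁻¹ ∈ A → a = 1 := by
  intro g hg a ha hga
  by_contra ha1
  have hA_le : A ≤ centralizer {a} := fun x hx =>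
    mem_centralizer_singleton_iff.mpr (habelian x hx a ha)
  have hcentralizer : centralizer {a} = A := hmax _ (fun x hx y hy =>
    hG.commute_of_commute ha1 (mem_centralizer_singleton_iff.mp hx)
      (mem_centralizer_singleton_iff.mp hy)) hA_le
  exact hg (hcentralizer ▸ mem_centralizer_singleton_iff.mpr
    (hG.commute_of_commute_conj ha1 (habelian a ha _ hga)))
end

section
/- Let G be a fully residually free group and let A, B be abelian subgroups of G such that there exist a ∈ A and b ∈ B with [a,b] ≠ 1. Then ⟨A,B⟩ = A ∗ B; that is, the canonical homomorphism from the free product A ∗ B to G induced by the inclusions of A and B is injective, with image the subgroup generated by A and B. -/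
open Function

theorem Finset.exists_perm_eq_mul_of_mul_mem {G : Type*} [Group G] (X : Finset G) (g : G) :
    ∃ σ : Equiv.Perm X, ∀ x : X, g * x ∈ X → (σ x : G) = g * x := by
  obtain ⟨σ, hσ⟩ := Set.MapsTo.exists_equiv_extend_of_card_eq (t := X) (Fintype.card_coe X)
    (s := {x : X | g * x ∈ X}) (f := fun x => g * x) (fun x hx => hx)
    (fun x _ y _ hxy => Subtype.ext (mul_left_cancel hxy))
  exact ⟨σ, fun x hx => hσ x hx⟩

theorem Group.finite_monoidHom_of_fg_s4 (G Q : Type*) [Group G] [Group.FG G] [Group Q] [Finite Q] :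
    Finite (G →* Q) := by
  obtain ⟨S, hS⟩ := Group.fg_def.1 ‹_›
  exact Finite.of_injective (fun χ : G →* Q => fun s : S => χ s)
    fun χ ψ h => MonoidHom.eq_of_eqOn_dense hS fun s hs => congrFun h ⟨s, hs⟩

theorem MonoidHom.injective_of_surjective_of_residuallyFinite {G : Type*} [Group G]
    [Group.FG G] [Group.ResiduallyFinite G] (f : G →* G) (hf : Surjective f) : Injective f := by
  refine (injective_iff_map_eq_one f).2 fun x hx => ?_
  refine Group.eq_one_iff_forall_finiteIndexNormalSubroup x fun N => ?_
  have := Group.finite_monoidHom_of_fg_s4 G (G ⧸ N.toSubgroup)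
  -- precomposition with `f` is injective, hence bijective, on the finite set `Hom(G, G ⧸ N)`
  obtain ⟨χ, hχ⟩ := Finite.injective_iff_surjective.1
    (fun _ _ h => (MonoidHom.cancel_right hf).1 h :
      Injective fun χ : G →* G ⧸ N.toSubgroup => χ.comp f)
    (QuotientGroup.mk' N.toSubgroup)
  have : QuotientGroup.mk' N.toSubgroup x = 1 := by rw [← hχ, MonoidHom.comp_apply, hx, map_one]
  exact FiniteIndexNormalSubgroup.mem_toSubgroup_iff.1 (by simpa using this)

universe u

namespace FreeGroup

theorem finite_and_card_le_of_surjective {α β : Type*} [Finite α]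
    (θ : FreeGroup α →* FreeGroup β) (hθ : Surjective θ) : Finite β ∧ Nat.card β ≤ Nat.card α := by
  classical
  let Z := Multiplicative (ZMod 2)
  let res : (β → Z) → (α → Z) := fun χ a => lift χ (θ (of a))
  have hres : Injective res := fun χ ψ h => lift.injective <|
    (MonoidHom.cancel_right hθ).1 <| ext_hom _ _ fun a => congrFun h a
  have : Finite β :=
    Finite.of_injective (fun b => res fun c => if c = b then Multiplicative.ofAdd 1 else 1)
      fun b c h => by_contra fun hbc =>
        absurd (by simpa [hbc] using congrFun (hres h) b) (by decide)
  refine ⟨this, ?_⟩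
  have := Nat.card_le_card_of_injective res hres
  simp only [Nat.card_fun, Nat.card_eq_fintype_card, Z, Fintype.card_multiplicative,
    ZMod.card] at this
  exact (Nat.pow_le_pow_iff_right (by norm_num)).1 this

theorem not_commute_of_ne {β : Type*} {s t : β} (h : s ≠ t) : ¬Commute (of s) (of t) := by
  classical
  intro hc
  have := (hc.map (lift fun x => if x = s then Equiv.swap (0 : Fin 3) 1 else Equiv.swap 1 2)).eq
  simp only [lift_apply_of, if_neg h.symm] at this
  exact absurd this (by decide)

theorem isCyclic_of_subsingleton (β : Type*) [Subsingleton β] : IsCyclic (FreeGroup β) := by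
  cases isEmpty_or_nonempty β
  · infer_instance
  · have := uniqueOfSubsingleton (Classical.arbitrary β)
    infer_instance

variable {α : Type u}

theorem mk_cons (a : α) (b : Bool) (L : List (α × Bool)) :
    mk ((a, b) :: L) = cond b (of a) (of a)⁻¹ * mk L := by
  cases b <;> simp [of, inv_mk, invRev, mul_mk]

theorem exists_finite_monoidHom_ne_one (w : FreeGroup α) (hw : w ≠ 1) :
    ∃ (H : Type u) (_ : Group H) (_ : Finite H) (f : FreeGroup α →* H), f w ≠ 1 := by
  classical
  obtain ⟨L, rfl⟩ : ∃ L, mk L = w := ⟨w.toWord, mk_toWord⟩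
  set X : Finset (FreeGroup α) := (L.tails.map mk).toFinset
  have hX : ∀ T, T <:+ L → mk T ∈ X := fun T hT =>
    List.mem_toFinset.2 (List.mem_map_of_mem ((List.mem_tails _ _).2 hT))
  choose σ hσ using fun a => X.exists_perm_eq_mul_of_mul_mem (of a)
  have h1 : (1 : FreeGroup α) ∈ X := hX [] List.nil_suffix
  -- `lift σ` moves `1` along the suffixes of `L`, ending at `mk L ≠ 1`
  have key : ∀ T, T <:+ L → (lift σ (mk T) ⟨1, h1⟩ : FreeGroup α) = mk T := by
    intro T
    induction T with
    | nil => intro _; rfl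
    | cons x T ih =>
      obtain ⟨a, b⟩ := x
      intro hT
      have hT' : T <:+ L := (List.suffix_cons _ _).trans hT
      have hstep : lift σ (mk ((a, b) :: T)) ⟨1, h1⟩ =
          cond b (σ a) (σ a)⁻¹ ⟨mk T, hX T hT'⟩ := by
        have hTX : lift σ (mk T) ⟨1, h1⟩ = ⟨mk T, hX T hT'⟩ := Subtype.ext (ih hT')
        rw [mk_cons, _root_.map_mul, Equiv.Perm.mul_apply, hTX]
        cases b <;> simp
      rw [hstep]
      cases b
      · have hmem := hX _ hT
        have hinv : (σ a)⁻¹ ⟨mk T, hX T hT'⟩ = ⟨_, hmem⟩ := by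
          refine Equiv.Perm.inv_eq_iff_eq.2 (Subtype.ext ?_)
          rw [hσ a _ (by simpa [mk_cons] using hX T hT')]
          simp [mk_cons]
        rw [cond_false, hinv]
      · have hmem : of a * mk T ∈ X := by simpa [mk_cons] using hX _ hT
        rw [cond_true, hσ a _ hmem, mk_cons, cond_true]
  refine ⟨Equiv.Perm X, inferInstance, inferInstance, lift σ, fun h => hw ?_⟩
  simpa [h] using (key L (List.suffix_refl L)).symm

instance : Group.ResiduallyFinite (FreeGroup α) :=
  Group.residuallyFinite_of_forall_exists_finite_monoidHom exists_finite_monoidHom_ne_one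

end FreeGroup

theorem IsFreeGroup.isCyclic_of_commute {G : Type*} [Group G] [IsFreeGroup G]
    (h : ∀ x y : G, Commute x y) : IsCyclic G := by
  let e := IsFreeGroup.toFreeGroup G
  have : Subsingleton (IsFreeGroup.Generators G) := ⟨fun s t => by_contra fun hst =>
    FreeGroup.not_commute_of_ne hst (by simpa using (h (e.symm (.of s)) (e.symm (.of t))).map e)⟩
  have := FreeGroup.isCyclic_of_subsingleton (IsFreeGroup.Generators G)
  exact isCyclic_of_surjective e.symm e.symm.surjective

namespace FreeGroup

variable {α : Type u}

theorem exists_le_zpowers_of_commute (H : Subgroup (FreeGroup α))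
    (hH : ∀ x ∈ H, ∀ y ∈ H, Commute x y) : ∃ p, H ≤ Subgroup.zpowers p := by
  have : IsCyclic H := IsFreeGroup.isCyclic_of_commute fun x y => Subtype.ext (hH x x.2 y y.2).eq
  obtain ⟨g, hg⟩ := IsCyclic.exists_generator (α := H)
  refine ⟨g, fun x hx => ?_⟩
  simpa [MonoidHom.map_zpowers] using Subgroup.mem_map_of_mem H.subtype (hg ⟨x, hx⟩)

theorem injective_lift_of_not_commute_s4 {p q : FreeGroup α} (hpq : ¬Commute p q) :
    Injective (lift fun b : Bool => cond b p q) := by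
  set f : FreeGroup Bool →* FreeGroup α := lift fun b => cond b p q
  let e := IsFreeGroup.toFreeGroup f.range
  let θ := e.toMonoidHom.comp f.rangeRestrict
  have hθ : Surjective θ := e.surjective.comp f.rangeRestrict_surjective
  obtain ⟨_, hcard⟩ := finite_and_card_le_of_surjective θ hθ
  have : Nontrivial (IsFreeGroup.Generators f.range) := by
    by_contra hT
    rw [not_nontrivial_iff_subsingleton] at hT
    have := isCyclic_of_subsingleton (IsFreeGroup.Generators f.range)
    have : IsCyclic f.range := isCyclic_of_surjective e.symm e.symm.surjective
    have hp : p ∈ f.range := ⟨of true, by simp [f]⟩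
    have hq : q ∈ f.range := ⟨of false, by simp [f]⟩
    let := IsCyclic.commGroup (α := f.range)
    exact hpq (congrArg Subtype.val (mul_comm (⟨p, hp⟩ : f.range) ⟨q, hq⟩))
  obtain ⟨τ⟩ : Nonempty (IsFreeGroup.Generators f.range ≃ Bool) :=
    Finite.card_eq.1 (le_antisymm hcard (by simpa using Finite.one_lt_card.nat_succ_le))
  let θ' := (freeGroupCongr τ).toMonoidHom.comp θ
  have hθ' : Injective θ' := θ'.injective_of_surjective_of_residuallyFinite
    ((freeGroupCongr τ).surjective.comp hθ)
  intro x y hxy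
  have : f.rangeRestrict x = f.rangeRestrict y := Subtype.ext hxy
  exact hθ' (by simp [θ', θ, this])

theorem range_lift_const {G : Type*} [Group G] (p : G) :
    (lift fun _ : Unit => p).range = Subgroup.zpowers p := by
  rw [range_lift_eq_closure, Set.range_const, Subgroup.zpowers_eq_closure]

theorem injective_coprodI_lift_of_injective_lift {ι G : Type*} [Group G] (a : ι → G)
    (h : Injective (FreeGroup.lift a)) :
    Injective (Monoid.CoprodI.lift fun i => FreeGroup.lift fun _ : Unit => a i) := by
  have : FreeGroup.lift a = (Monoid.CoprodI.lift fun i => FreeGroup.lift fun _ : Unit => a i).comp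
      freeGroupEquivCoprodI.toMonoidHom := by
    ext i
    simp
  rw [this, MonoidHom.coe_comp] at h
  exact h.of_comp_right freeGroupEquivCoprodI.surjective

end FreeGroup

namespace Monoid.CoprodI.Word

variable {ι : Type*} {M N : ι → Type*} [∀ i, Monoid (M i)] [∀ i, Monoid (N i)]

theorem prod_ne_one [DecidableEq ι] [∀ i, DecidableEq (M i)] {w : Word M} (hw : w.toList ≠ []) :
    w.prod ≠ 1 := fun h => hw <| by
  rw [← Word.empty_toList (M := M)]
  exact congrArg toList (equiv.symm.injective (h.trans prod_empty.symm))

theorem lift_prod_ne_one {K : Type*} [Monoid K] (f : ∀ i, M i →* K) (g : ∀ i, N i →* K)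
    (hg : Injective (lift g)) {w : Word M} (hw : w.toList ≠ [])
    (h : ∀ l ∈ w.toList, ∃ n : N l.1, n ≠ 1 ∧ g l.1 n = f l.1 l.2) : lift f w.prod ≠ 1 := by
  classical
  have h' (l : Σ i, M i) : ∃ n : N l.1, l ∈ w.toList → n ≠ 1 ∧ g l.1 n = f l.1 l.2 := by
    by_cases hl : l ∈ w.toList
    · exact (h l hl).imp fun n hn _ => hn
    · exact ⟨1, fun h => (hl h).elim⟩
  choose ρ hρ using h'
  let w' : Word N :=
    { toList := w.toList.map fun l => ⟨l.1, ρ l⟩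
      ne_one := by
        simp only [List.mem_map, forall_exists_index, and_imp]
        rintro _ l hl rfl
        exact (hρ l hl).1
      chain_ne := List.isChain_map _ |>.2 w.chain_ne }
  have hw' : lift g w'.prod = lift f w.prod := by
    simp only [prod, map_list_prod, List.map_map, w']
    congr 1
    refine List.map_congr_left fun l hl => ?_
    simp [(hρ l hl).2]
  rw [← hw', ← map_one (lift g)]
  exact hg.ne (prod_ne_one (by simpa [w'] using hw))

end Monoid.CoprodI.Word

theorem Subgroup.injective_coprod_lift_of_injective_coprodI_lift {G : Type*} [Group G]
    (A B : Subgroup G) (h : Injective (Monoid.CoprodI.lift fun i => (cond i A B).subtype)) :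
    Injective (Monoid.Coprod.lift A.subtype B.subtype) := by
  let Φ : Monoid.Coprod A B →* Monoid.CoprodI fun i => ↥(cond i A B) :=
    Monoid.Coprod.lift (Monoid.CoprodI.of (M := fun i => ↥(cond i A B)) (i := true))
      (Monoid.CoprodI.of (M := fun i => ↥(cond i A B)) (i := false))
  let Θ : (Monoid.CoprodI fun i => ↥(cond i A B)) →* Monoid.Coprod A B :=
    Monoid.CoprodI.lift fun | true => Monoid.Coprod.inl | false => Monoid.Coprod.inr
  have hΘΦ : Θ.comp Φ = .id _ := Monoid.Coprod.hom_ext rfl rfl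
  have hΦ : Monoid.Coprod.lift A.subtype B.subtype =
      (Monoid.CoprodI.lift fun i => (cond i A B).subtype).comp Φ :=
    Monoid.Coprod.hom_ext rfl rfl
  rw [hΦ, MonoidHom.coe_comp]
  exact h.comp (LeftInverse.injective (g := Θ) (DFunLike.congr_fun hΘΦ))

section

variable {G : Type} [Group G] {A B : Subgroup G}

theorem exists_map_le_zpowers_of_not_commute {α : Type} (φ : G →* FreeGroup α)
    (hA : ∀ x ∈ A, ∀ y ∈ A, x * y = y * x) (hB : ∀ x ∈ B, ∀ y ∈ B, x * y = y * x)
    {a b : G} (ha : a ∈ A) (hb : b ∈ B) (hab : ¬Commute (φ a) (φ b)) :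
    ∃ p q, ¬Commute p q ∧ A.map φ ≤ Subgroup.zpowers p ∧ B.map φ ≤ Subgroup.zpowers q := by
  have image_commute {H : Subgroup G} (hH : ∀ x ∈ H, ∀ y ∈ H, x * y = y * x) :
      ∀ x ∈ H.map φ, ∀ y ∈ H.map φ, Commute x y := by
    rintro _ ⟨x, hx, rfl⟩ _ ⟨y, hy, rfl⟩
    exact (show Commute x y from hH x hx y hy).map φ
  obtain ⟨p, hp⟩ := FreeGroup.exists_le_zpowers_of_commute _ (image_commute hA)
  obtain ⟨q, hq⟩ := FreeGroup.exists_le_zpowers_of_commute _ (image_commute hB)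
  refine ⟨p, q, fun hpq => hab ?_, hp, hq⟩
  obtain ⟨k, hk⟩ := Subgroup.mem_zpowers_iff.1 (hp (Subgroup.mem_map_of_mem φ ha))
  obtain ⟨l, hl⟩ := Subgroup.mem_zpowers_iff.1 (hq (Subgroup.mem_map_of_mem φ hb))
  exact hk ▸ hl ▸ hpq.zpow_zpow k l

theorem injective_coprodI_lift_of_fullyResiduallyFree (hG : FullyResiduallyFree G)
    (hA : ∀ x ∈ A, ∀ y ∈ A, x * y = y * x) (hB : ∀ x ∈ B, ∀ y ∈ B, x * y = y * x)
    {a b : G} (ha : a ∈ A) (hb : b ∈ B) (hab : a * b ≠ b * a) :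
    Injective (Monoid.CoprodI.lift fun i => (cond i A B).subtype) := by
  classical
  refine (injective_iff_map_eq_one _).2 fun x hx => by_contra fun hx1 => ?_
  set w := Monoid.CoprodI.Word.equiv x
  have hwx : w.prod = x := Monoid.CoprodI.Word.equiv.symm_apply_apply x
  have hw : w.toList ≠ [] := fun h => hx1 <| by
    rw [← hwx, show w = .empty from Monoid.CoprodI.Word.ext h, Monoid.CoprodI.Word.prod_empty]
  obtain ⟨α, φ, hφ⟩ := hG ({1, a * b, b * a} ∪ (w.toList.map fun l => (l.2 : G)).toFinset)
  have hφab : ¬Commute (φ a) (φ b) := fun h => hab <|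
    hφ (by simp) (by simp) (by simpa only [map_mul] using h.eq)
  obtain ⟨p, q, hpq, hp, hq⟩ := exists_map_le_zpowers_of_not_commute φ hA hB ha hb hφab
  refine Monoid.CoprodI.Word.lift_prod_ne_one (fun i => φ.comp (cond i A B).subtype)
    (fun i => FreeGroup.lift fun _ => cond i p q)
    (FreeGroup.injective_coprodI_lift_of_injective_lift _
      (FreeGroup.injective_lift_of_not_commute_s4 hpq)) hw ?_ ?_
  · rintro ⟨i, m⟩ hm
    have hφm : φ m ∈ (FreeGroup.lift fun _ : Unit => cond i p q).range := by
      rw [FreeGroup.range_lift_const]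
      cases i
      · exact hq (Subgroup.mem_map_of_mem φ m.2)
      · exact hp (Subgroup.mem_map_of_mem φ m.2)
    obtain ⟨n, hn⟩ := hφm
    refine ⟨n, fun h1 => w.ne_one _ hm (OneMemClass.coe_eq_one.1 ?_), hn⟩
    refine hφ (Finset.mem_union_right _ (List.mem_toFinset.2 (List.mem_map_of_mem hm)))
      (by simp) ?_
    rw [← hn, h1, map_one, map_one]
  · have : Monoid.CoprodI.lift (fun i => φ.comp (cond i A B).subtype) =
        φ.comp (Monoid.CoprodI.lift fun i => (cond i A B).subtype) :=
      Monoid.CoprodI.ext_hom _ _ fun i => by ext; simp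
    rw [this, MonoidHom.comp_apply, hwx, hx, map_one]

end

/-- If `A` and `B` are abelian subgroups of a fully residually free group `G` containing a
pair of non-commuting elements `a ∈ A`, `b ∈ B`, then `⟨A, B⟩ = A ∗ B`: the canonical
homomorphism from the free product `A ∗ B` to `G` is injective with image `A ⊔ B`. -/
theorem abelian_subgroups_free_product (G : Type) [Group G] (hG : FullyResiduallyFree G)
    (A B : Subgroup G)
    (hA : ∀ x ∈ A, ∀ y ∈ A, x * y = y * x)
    (hB : ∀ x ∈ B, ∀ y ∈ B, x * y = y * x)
    (h : ∃ a ∈ A, ∃ b ∈ B, a * b ≠ b * a) :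
    Function.Injective (Monoid.Coprod.lift A.subtype B.subtype) ∧
      (Monoid.Coprod.lift A.subtype B.subtype).range = A ⊔ B := by
  obtain ⟨a, ha, b, hb, hab⟩ := h
  refine ⟨Subgroup.injective_coprod_lift_of_injective_coprodI_lift A B
    (injective_coprodI_lift_of_fullyResiduallyFree hG hA hB ha hb hab), ?_⟩
  rw [Monoid.Coprod.range_lift, Subgroup.range_subtype, Subgroup.range_subtype]
end
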